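/- arXiv:1406.0098 — 5 statements merged into one kernel-verified Lean document; each statement's English description precedes it below -/
import Mathlib

section
/- Let R be a ring and (ψ_n)_{n<ω} a descending sequence of pp-formula data. Let (U_i)_{i∈I} and (V_j)_{j∈J} be families of left R-modules and f : ∏_{i∈I} U_i → ⊕_{j∈J} V_j a module homomorphism. Then there exist n₀ < ω, a finite number of ω₁-complete ultrafilters D₁, …, D_k on I, and a finite subset J′ of J such that f( ψ_{n₀}(∏_{i∈I} U_i) ∩ ⋂_{n=1}^{k} Ker(π_{D_n}) ) ⊆ ⊕_{j∈J′} V_j + ⋂_{n<ω} ψ_n(⊕_{j∈J} V_j). -/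
universe u

open Cardinal

/-- A pp-formula datum over `R`: numbers `n`, `k`, a vector `a : Fin n → R` and a
matrix `B : Fin k → Fin n → R`. -/
structure PPFormula (R : Type u) [Ring R] where
  n : ℕ
  k : ℕ
  a : Fin n → R
  B : Fin k → Fin n → R

/-- The pp-definable subgroup of `M` defined by the pp-formula datum `ψ`:
`{ m ∈ M : ∃ y, ∀ j, (a j) • m + ∑ i, (B i j) • y i = 0 }`. -/
def PPFormula.set {R : Type u} [Ring R] (ψ : PPFormula R)
    (M : Type u) [AddCommGroup M] [Module R M] : Set M :=
  {m | ∃ y : Fin ψ.k → M, ∀ j : Fin ψ.n, ψ.a j • m + ∑ i : Fin ψ.k, ψ.B i j • y i = 0}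

/-- A filter is `θ`-complete if it is closed under intersections of fewer than `θ`
of its members. -/
def FilterComplete {I : Type u} (F : Filter I) (θ : Cardinal.{u}) : Prop :=
  ∀ S : Set (Set I), #S < θ → (∀ s ∈ S, s ∈ F) → ⋂₀ S ∈ F

open DirectSum

/-- A sequence of pp-formula data is descending if `ψ_{n+1}(N) ⊆ ψ_n(N)` for every
left `R`-module `N`. -/
def PPDescending {R : Type u} [Ring R] (ψ : ℕ → PPFormula R) : Prop :=
  ∀ (n : ℕ) (N : Type u) [AddCommGroup N] [Module R N], (ψ (n + 1)).set N ⊆ (ψ n).set N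

/-!
Call `A ⊆ I` negligible if for some `n` and some finite `E ⊆ J`, `f` maps every element of
`ψ_n(∏ U)` supported in `A` into `⊕_{j ∈ E} V_j + ⋂_k ψ_k(⊕ V)`. A diagonal argument shows that
negligible sets form a σ-ideal, that there is no infinite family of disjoint non-negligible sets,
and that a single pair `(n, E)` serves for all negligible sets at once: a sequence of
counterexamples with pointwise eventually vanishing entries can be summed in the product, and the
image of the sum, having finite support in the direct sum, contradicts the choice of the
counterexamples. By the second property `𝒫(I)` modulo negligible sets is a finite Boolean algebra,
so the filter `F` of co-negligible sets is the intersection of finitely many ultrafilters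
`F ⊓ 𝓟 A_t`, countably complete by the first property. An element of
`ψ_n(∏ U) ∩ ⋂_t Ker π_{D_t}` then has negligible support, and the third property applies.
-/

open Filter Set Function

namespace PPFormula

variable {R : Type u} [Ring R] (φ : PPFormula R)

def addSubgroup (M : Type u) [AddCommGroup M] [Module R M] : AddSubgroup M where
  carrier := φ.set M
  zero_mem' := ⟨0, fun j => by simp⟩
  add_mem' := by
    rintro x y ⟨z, hz⟩ ⟨w, hw⟩
    refine ⟨z + w, fun j => ?_⟩
    simp only [Pi.add_apply, smul_add, Finset.sum_add_distrib]
    rw [add_add_add_comm, hz j, hw j, add_zero]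
  neg_mem' := by
    rintro x ⟨z, hz⟩
    refine ⟨-z, fun j => ?_⟩
    simp only [Pi.neg_apply, smul_neg, Finset.sum_neg_distrib, ← neg_add, hz j, neg_zero]

variable {φ}

theorem map_mem {M N : Type u} [AddCommGroup M] [Module R M] [AddCommGroup N] [Module R N]
    (g : M →ₗ[R] N) {x : M} (hx : x ∈ φ.set M) : g x ∈ φ.set N := by
  obtain ⟨y, hy⟩ := hx
  refine ⟨fun i => g (y i), fun j => ?_⟩
  simpa only [map_add, map_sum, map_smul, map_zero] using congrArg g (hy j)

theorem mem_set_pi_iff {I : Type u} {U : I → Type u} [∀ i, AddCommGroup (U i)]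
    [∀ i, Module R (U i)] {x : ∀ i, U i} : x ∈ φ.set (∀ i, U i) ↔ ∀ i, x i ∈ φ.set (U i) := by
  constructor
  · rintro ⟨y, hy⟩ i
    exact ⟨fun t => y t i, fun j => by simpa [Finset.sum_apply] using congrFun (hy j) i⟩
  · intro h
    choose y hy using h
    exact ⟨fun t i => y i t, fun j => funext fun i => by simpa [Finset.sum_apply] using hy i j⟩

end PPFormula

section

variable {R : Type u} [Ring R] {ψ : ℕ → PPFormula R}

theorem PPDescending.antitone (hdesc : PPDescending ψ) (M : Type u) [AddCommGroup M]
    [Module R M] : Antitone fun n => (ψ n).set M :=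
  antitone_nat_of_succ_le fun n => hdesc n M

variable (ψ) in
def ppInter (M : Type u) [AddCommGroup M] [Module R M] : AddSubgroup M :=
  ⨅ n, (ψ n).addSubgroup M

theorem mem_ppInter {M : Type u} [AddCommGroup M] [Module R M] {x : M} :
    x ∈ ppInter ψ M ↔ ∀ n, x ∈ (ψ n).set M :=
  AddSubgroup.mem_iInf

theorem map_mem_ppInter {M N : Type u} [AddCommGroup M] [Module R M] [AddCommGroup N]
    [Module R N] (g : M →ₗ[R] N) {x : M} (hx : x ∈ ppInter ψ M) : g x ∈ ppInter ψ N :=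
  mem_ppInter.2 fun n => PPFormula.map_mem g (mem_ppInter.1 hx n)

variable {I J : Type u} {U : I → Type u} [∀ i, AddCommGroup (U i)] [∀ i, Module R (U i)]
  {V : J → Type u} [∀ j, AddCommGroup (V j)] [∀ j, Module R (V j)]

variable (R) in
open Classical in
/-- Erases the coordinates in `E`. Thus `projCompl R E w ∈ ppInter ψ _` says that
`w ∈ ⊕_{j ∈ E} V_j + ⋂ₖ ψ_k(⊕ V)`, the form of the conclusion of the main theorem. -/
noncomputable def projCompl (E : Finset J) : (⨁ j, V j) →ₗ[R] ⨁ j, V j :=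
  DFinsupp.filterLinearMap R V (· ∉ E)

theorem projCompl_apply_of_mem {E : Finset J} (v : ⨁ j, V j) {j : J} (hj : j ∈ E) :
    projCompl R E v j = 0 := by
  classical
  exact DFinsupp.filter_apply_neg _ (not_not.2 hj)

theorem projCompl_apply_of_notMem {E : Finset J} (v : ⨁ j, V j) {j : J} (hj : j ∉ E) :
    projCompl R E v j = v j := by
  classical
  exact DFinsupp.filter_apply_pos _ hj

theorem projCompl_projCompl {E E' : Finset J} (h : E ⊆ E') (v : ⨁ j, V j) :
    projCompl R E' (projCompl R E v) = projCompl R E' v := by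
  ext j
  by_cases hj : j ∈ E'
  · simp only [projCompl_apply_of_mem _ hj]
  · rw [projCompl_apply_of_notMem _ hj, projCompl_apply_of_notMem _ hj,
      projCompl_apply_of_notMem _ (fun h' => hj (h h'))]

theorem projCompl_eq_zero {E : Finset J} {v : ⨁ j, V j} (h : ∀ j, v j ≠ 0 → j ∈ E) :
    projCompl R E v = 0 := by
  ext j
  by_cases hj : j ∈ E
  · rw [projCompl_apply_of_mem _ hj, DirectSum.zero_apply]
  · rw [projCompl_apply_of_notMem _ hj, DirectSum.zero_apply]
    exact not_not.1 (mt (h j) hj)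

theorem exists_projCompl_succ_eq {E : ℕ → Finset J} (hE : Monotone E) (v : ⨁ j, V j) :
    ∃ t, projCompl R (E (t + 1)) v = projCompl R (E t) v := by
  classical
  have hτ : ∀ j, ∃ τ, ∀ t, j ∈ E t → j ∈ E τ := fun j => by
    by_cases h : ∃ t, j ∈ E t
    · obtain ⟨τ, hτ⟩ := h
      exact ⟨τ, fun _ _ => hτ⟩
    · exact ⟨0, fun t ht => (h ⟨t, ht⟩).elim⟩
  choose τ hτ using hτ
  set t := (DFinsupp.support v).sup τ
  refine ⟨t, DFinsupp.ext fun j => ?_⟩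
  by_cases ht : j ∈ E t
  · rw [projCompl_apply_of_mem _ ht, projCompl_apply_of_mem _ (hE t.le_succ ht)]
  rw [projCompl_apply_of_notMem _ ht]
  by_cases ht' : j ∈ E (t + 1)
  · rw [projCompl_apply_of_mem _ ht']
    by_contra hv
    exact ht (hE (Finset.le_sup (DFinsupp.mem_support_iff.2 (Ne.symm hv))) (hτ j _ ht'))
  · rw [projCompl_apply_of_notMem _ ht']

variable (ψ) in
def NegligibleWith (f : (∀ i, U i) →ₗ[R] ⨁ j, V j) (n : ℕ) (E : Finset J) (A : Set I) : Prop :=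
  ∀ x ∈ (ψ n).set (∀ i, U i), (∀ i ∉ A, x i = 0) → projCompl R E (f x) ∈ ppInter ψ (⨁ j, V j)

variable (ψ) in
def Negligible (f : (∀ i, U i) →ₗ[R] ⨁ j, V j) (A : Set I) : Prop :=
  ∃ n E, NegligibleWith ψ f n E A

variable {f : (∀ i, U i) →ₗ[R] ⨁ j, V j} {n n' : ℕ} {E E' : Finset J} {A A' : Set I}

theorem exists_of_not_negligibleWith (h : ¬ NegligibleWith ψ f n E A) :
    ∃ x ∈ (ψ n).set (∀ i, U i), (∀ i ∉ A, x i = 0) ∧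
      projCompl R E (f x) ∉ ppInter ψ (⨁ j, V j) := by
  simpa [NegligibleWith] using h

theorem NegligibleWith.mono (hdesc : PPDescending ψ) (h : NegligibleWith ψ f n E A)
    (hn : n ≤ n') (hE : E ⊆ E') (hA : A' ⊆ A) : NegligibleWith ψ f n' E' A' := by
  intro x hx hxA
  rw [← projCompl_projCompl hE]
  exact map_mem_ppInter _ <|
    h x (hdesc.antitone _ hn hx) fun i hi => hxA i fun hi' => hi (hA hi')

theorem Negligible.mono (h : Negligible ψ f A) (hA : A' ⊆ A) : Negligible ψ f A' := by
  obtain ⟨n, E, h⟩ := h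
  exact ⟨n, E, fun x hx hxA => h x hx fun i hi => hxA i fun hi' => hi (hA hi')⟩

theorem negligible_empty : Negligible ψ f (∅ : Set I) := by
  refine ⟨0, ∅, fun x _ hx => ?_⟩
  rw [show x = 0 from funext fun i => hx i (notMem_empty i), map_zero, map_zero]
  exact zero_mem _

theorem NegligibleWith.union [DecidableEq J] (hdesc : PPDescending ψ) {n₁ n₂ : ℕ}
    {E₁ E₂ : Finset J} {A₁ A₂ : Set I} (h₁ : NegligibleWith ψ f n₁ E₁ A₁)
    (h₂ : NegligibleWith ψ f n₂ E₂ A₂) : NegligibleWith ψ f (max n₁ n₂) (E₁ ∪ E₂) (A₁ ∪ A₂) := by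
  classical
  intro x hx hxA
  have hx₁ : A₁.piecewise x 0 ∈ (ψ (max n₁ n₂)).set (∀ i, U i) := by
    refine PPFormula.mem_set_pi_iff.2 fun i => ?_
    by_cases hi : i ∈ A₁
    · rw [piecewise_eq_of_mem _ _ _ hi]
      exact PPFormula.mem_set_pi_iff.1 hx i
    · rw [piecewise_eq_of_notMem _ _ _ hi]
      exact ((ψ _).addSubgroup (U i)).zero_mem
  have hx₂ : x - A₁.piecewise x 0 ∈ (ψ (max n₁ n₂)).set (∀ i, U i) :=
    ((ψ (max n₁ n₂)).addSubgroup _).sub_mem hx hx₁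
  rw [← add_sub_cancel (A₁.piecewise x 0) x, map_add, map_add]
  refine add_mem ((h₁.mono hdesc (le_max_left _ _) Finset.subset_union_left subset_rfl) _ hx₁
    fun i hi => by simp [hi]) ((h₂.mono hdesc (le_max_right _ _) Finset.subset_union_right
      subset_rfl) _ hx₂ fun i hi => ?_)
  by_cases hi₁ : i ∈ A₁
  · simp [hi₁]
  · simp [hi₁, hxA i (by simp [hi, hi₁])]

theorem Negligible.union (hdesc : PPDescending ψ) {A₁ A₂ : Set I} (h₁ : Negligible ψ f A₁)
    (h₂ : Negligible ψ f A₂) : Negligible ψ f (A₁ ∪ A₂) := by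
  classical
  obtain ⟨n₁, E₁, h₁⟩ := h₁
  obtain ⟨n₂, E₂, h₂⟩ := h₂
  exact ⟨_, _, h₁.union hdesc h₂⟩

theorem false_of_bad_sequence (hdesc : PPDescending ψ) (x : ℕ → ∀ i, U i) (N : ℕ → ℕ)
    (E : ℕ → Finset J) (hN : Monotone N) (hE : Monotone E)
    (hx : ∀ m, x m ∈ (ψ (N m)).set (∀ i, U i)) (hsupp : ∀ m j, f (x m) j ≠ 0 → j ∈ E (m + 1))
    (hzero : ∀ i, ∀ᶠ m in atTop, x m i = 0)
    (hbad : ∀ m, projCompl R (E m) (f (x m)) ∉ (ψ (N (m + 1))).set (⨁ j, V j)) : False := by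
  -- `y t = ∑_{m ≥ t} x m`, a finite sum in each coordinate. Once the sets `E t` are stable on the
  -- finite support of `f (y 0)`, `projCompl R (E t) (f (x t))` is a difference of two elements
  -- of `ψ_{N (t + 1)}`.
  choose τ hτ using fun i => eventually_atTop.1 (hzero i)
  let y : ℕ → ∀ i, U i := fun t i => ∑ m ∈ Finset.Ico t (τ i), x m i
  have hy_succ : ∀ t, y t = x t + y (t + 1) := fun t => funext fun i => by
    by_cases ht : t < τ i
    · exact Finset.sum_eq_sum_Ico_succ_bot ht _
    · simp [y, Finset.Ico_eq_empty_of_le (not_lt.1 ht),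
        Finset.Ico_eq_empty_of_le ((not_lt.1 ht).trans t.le_succ), hτ i t (not_lt.1 ht)]
  have hy_mem : ∀ t, y t ∈ (ψ (N t)).set (∀ i, U i) := fun t =>
    PPFormula.mem_set_pi_iff.2 fun i => ((ψ (N t)).addSubgroup (U i)).sum_mem fun m hm =>
      hdesc.antitone _ (hN (Finset.mem_Ico.1 hm).1) (PPFormula.mem_set_pi_iff.1 (hx m) i)
  have hfy : ∀ t, f (y 0) = ∑ m ∈ Finset.range t, f (x m) + f (y t) := fun t => by
    induction t with
    | zero => simp
    | succ t ih => rw [ih, hy_succ t, map_add, Finset.sum_range_succ, add_assoc]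
  have hproj : ∀ t, projCompl R (E t) (f (y 0)) = projCompl R (E t) (f (y t)) := fun t => by
    rw [hfy t, map_add, map_sum, Finset.sum_eq_zero fun m hm => projCompl_eq_zero fun j hj =>
      hE (Finset.mem_range.1 hm) (hsupp m j hj), zero_add]
  obtain ⟨t, ht⟩ := exists_projCompl_succ_eq (R := R) hE (f (y 0))
  refine hbad t ?_
  have key : projCompl R (E t) (f (x t)) =
      projCompl R (E (t + 1)) (f (y (t + 1))) - projCompl R (E t) (f (y (t + 1))) := by
    rw [← hproj, ht, hproj, hy_succ t, map_add, map_add, add_sub_cancel_right]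
  rw [key]
  exact ((ψ _).addSubgroup _).sub_mem (PPFormula.map_mem _ (PPFormula.map_mem _ (hy_mem _)))
    (PPFormula.map_mem _ (PPFormula.map_mem _ (hy_mem _)))

theorem false_of_forall_exists_not_negligibleWith (hdesc : PPDescending ψ) {σ : Type*}
    (s₀ : σ) (Rel : ℕ → σ → Set I → σ → Prop)
    (hstep : ∀ m n E s, ∃ A s', Rel m s A s' ∧ ¬ NegligibleWith ψ f n E A)
    (hfin : ∀ (s : ℕ → σ) (A : ℕ → Set I), (∀ m, Rel m (s m) (A m) (s (m + 1))) →
      ∀ i, ∀ᶠ m in atTop, i ∉ A m) : False := by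
  classical
  have hstep' : ∀ m n E s, ∃ A s' x k, Rel m s A s' ∧ x ∈ (ψ n).set (∀ i, U i) ∧
      (∀ i ∉ A, x i = 0) ∧ projCompl R E (f x) ∉ (ψ k).set (⨁ j, V j) := fun m n E s => by
    obtain ⟨A, s', hRel, hA⟩ := hstep m n E s
    obtain ⟨x, hx, hxA, hbad⟩ := exists_of_not_negligibleWith hA
    obtain ⟨k, hk⟩ := not_forall.1 (mt mem_ppInter.2 hbad)
    exact ⟨A, s', x, k, hRel, hx, hxA, hk⟩
  choose A S X K hRel hX hXA hK using hstep'
  -- `g m` holds the level, the finite set and the state at which the `m`-th witness is chosen.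
  let g : ℕ → ℕ × Finset J × σ := fun m => Nat.rec (0, ∅, s₀) (fun m p =>
    (max p.1 (K m p.1 p.2.1 p.2.2), p.2.1 ∪ (f (X m p.1 p.2.1 p.2.2)).support,
      S m p.1 p.2.1 p.2.2)) m
  have hfin' := hfin (fun m => (g m).2.2) (fun m => A m (g m).1 (g m).2.1 (g m).2.2)
    fun m => hRel _ _ _ _
  refine false_of_bad_sequence hdesc (fun m => X m (g m).1 (g m).2.1 (g m).2.2)
    (fun m => (g m).1) (fun m => (g m).2.1)
    (monotone_nat_of_le_succ fun m => le_max_left _ _)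
    (monotone_nat_of_le_succ fun m => Finset.subset_union_left) (fun m => hX _ _ _ _)
    (fun m j hj => Finset.mem_union_right _ (DFinsupp.mem_support_iff.2 hj))
    (fun i => (hfin' i).mono fun m hm => hXA _ _ _ _ i hm)
    fun m hm => hK _ _ _ _ (hdesc.antitone _ (le_max_right _ _) hm)

theorem exists_negligible_of_eventually_notMem (hdesc : PPDescending ψ) (A : ℕ → Set I)
    (hfin : ∀ i, ∀ᶠ m in atTop, i ∉ A m) : ∃ m, Negligible ψ f (A m) := by
  by_contra! hA
  exact false_of_forall_exists_not_negligibleWith hdesc () (fun m _ B _ => B = A m)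
    (fun m n E _ => ⟨A m, (), rfl, fun h => hA m ⟨n, E, h⟩⟩)
    fun _ B hB => by simpa only [hB] using hfin

theorem negligible_iUnion_of_monotone (hdesc : PPDescending ψ) {Z : ℕ → Set I}
    (hZ : Monotone Z) (h : ∀ m, Negligible ψ f (Z m)) : Negligible ψ f (⋃ m, Z m) := by
  have hfin : ∀ i, ∀ᶠ m in atTop, i ∉ (⋃ m, Z m) \ Z m := fun i => by
    by_cases hi : i ∈ ⋃ m, Z m
    · obtain ⟨m₀, hm₀⟩ := mem_iUnion.1 hi
      exact eventually_atTop.2 ⟨m₀, fun m hm him => him.2 (hZ hm hm₀)⟩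
    · exact Eventually.of_forall fun m him => hi him.1
  obtain ⟨m, hm⟩ := exists_negligible_of_eventually_notMem (f := f) hdesc _ hfin
  exact (hm.union hdesc (h m)).mono (by simp)

theorem negligible_sUnion (hdesc : PPDescending ψ) {S : Set (Set I)} (hS : S.Countable)
    (h : ∀ A ∈ S, Negligible ψ f A) : Negligible ψ f (⋃₀ S) := by
  rcases S.eq_empty_or_nonempty with rfl | hne
  · simpa using negligible_empty
  obtain ⟨Y, rfl⟩ := hS.exists_eq_range hne
  rw [sUnion_range, ← iUnion_accumulate]
  refine negligible_iUnion_of_monotone hdesc monotone_accumulate fun m => ?_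
  induction m with
  | zero => simpa [accumulate_zero_nat] using h _ (mem_range_self 0)
  | succ m ih => simpa [accumulate_succ] using ih.union hdesc (h _ (mem_range_self (m + 1)))

theorem eventually_notMem_of_pairwise_disjoint {α : Type*} {A : ℕ → Set α}
    (hA : Pairwise (Disjoint on A)) (a : α) : ∀ᶠ m in atTop, a ∉ A m := by
  by_cases ha : ∃ l, a ∈ A l
  · obtain ⟨l, hl⟩ := ha
    exact eventually_atTop.2 ⟨l + 1, fun m hm ham =>
      disjoint_left.1 (hA (by omega : l ≠ m)) hl ham⟩
  · exact Eventually.of_forall (not_exists.1 ha)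

theorem exists_negligible_of_pairwise_disjoint (hdesc : PPDescending ψ) (A : ℕ → Set I)
    (hA : Pairwise (Disjoint on A)) : ∃ m, Negligible ψ f (A m) :=
  exists_negligible_of_eventually_notMem hdesc A (eventually_notMem_of_pairwise_disjoint hA)

variable (f) in
theorem exists_forall_negligibleWith (hdesc : PPDescending ψ) :
    ∃ (n : ℕ) (E : Finset J), ∀ A, Negligible ψ f A → NegligibleWith ψ f n E A := by
  classical
  by_contra! h
  -- The state is the union of the supports of the earlier witnesses; cutting a counterexample
  -- for `(max n nB, E ∪ EB)` off it leaves a counterexample for `(n, E)`.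
  refine false_of_forall_exists_not_negligibleWith (f := f) hdesc
    (σ := {B : Set I // Negligible ψ f B}) ⟨∅, negligible_empty⟩
    (fun _ B A B' => B.1 ⊆ B'.1 ∧ A ⊆ B'.1 \ B.1) (fun _ n E B => ?_) ?_
  · obtain ⟨nB, EB, hB⟩ := B.2
    obtain ⟨S, hS, hSbad⟩ := h (max n nB) (E ∪ EB)
    refine ⟨S \ B.1, ⟨B.1 ∪ S, B.2.union hdesc hS⟩, ⟨subset_union_left, ?_⟩, fun hSB => ?_⟩
    · exact sdiff_subset_sdiff_left subset_union_right
    · exact hSbad ((hSB.union hdesc hB).mono hdesc le_rfl subset_rfl (by simp))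
  · intro s A hs
    have hmono : Monotone fun m => (s m).1 := monotone_nat_of_le_succ fun m => (hs m).1
    refine eventually_notMem_of_pairwise_disjoint <| (pairwise_disjoint_on A).2 fun l m hlm =>
      disjoint_left.2 fun i hl hm => ((hs m).2 hm).2 (hmono hlm ((hs l).2 hl).1)

variable (hdesc : PPDescending ψ) (f) in
def negligibleFilter : Filter I :=
  .ofCountableUnion {A | Negligible ψ f A} (fun _ hS h => negligible_sUnion hdesc hS h)
    fun _ ht _ hs => Negligible.mono ht hs

instance (hdesc : PPDescending ψ) : CountableInterFilter (negligibleFilter f hdesc) :=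
  countableInter_ofCountableUnion _ _ _

end

theorem filterComplete_aleph_one {I : Type u} (F : Filter I) [CountableInterFilter F] :
    FilterComplete F (Cardinal.aleph 1) := fun _ hS hSF =>
  (countable_sInter_mem <| Cardinal.le_aleph0_iff_set_countable.1 <|
    Cardinal.lt_aleph_one_iff.1 hS).2 hSF

namespace Filter

variable {α : Type*} {F : Filter α}

theorem exists_subset_ultrafilter_eq_inf_principal
    (hF : ∀ A : ℕ → Set α, Pairwise (Disjoint on A) → ∃ n, (A n)ᶜ ∈ F) {B : Set α}
    (hB : Bᶜ ∉ F) : ∃ A ⊆ B, ∃ D : Ultrafilter α, (D : Filter α) = F ⊓ 𝓟 A := by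
  -- `r X C`: `X` cuts `C` into two `F`-positive pieces. An `r`-minimal positive subset of `B`
  -- is an atom modulo `F`, and descending `r`-chains are excluded by `hF`.
  let r : Set α → Set α → Prop := fun X C => X ⊆ C ∧ Xᶜ ∉ F ∧ (C \ X)ᶜ ∉ F
  have hwf : WellFounded r := by
    refine wellFounded_iff_isEmpty_descending_chain.2 ⟨fun ⟨C, hC⟩ => ?_⟩
    have hanti : Antitone C := antitone_nat_of_succ_le fun n => (hC n).1
    obtain ⟨n, hn⟩ := hF (fun n => C n \ C (n + 1)) <| (pairwise_disjoint_on _).2 fun m n hmn =>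
      disjoint_left.2 fun x hxm hxn => hxm.2 (hanti (Nat.succ_le_of_lt hmn) hxn.1)
    exact (hC n).2.2 hn
  obtain ⟨A, ⟨hAB, hA⟩, hmin⟩ := hwf.has_min {X | X ⊆ B ∧ Xᶜ ∉ F} ⟨B, subset_rfl, hB⟩
  refine ⟨A, hAB, Ultrafilter.ofComplNotMemIff (F ⊓ 𝓟 A) fun Y => ?_, rfl⟩
  have h₁ : Aᶜ ∪ Yᶜ = (A ∩ Y)ᶜ := (compl_inter A Y).symm
  have h₂ : Aᶜ ∪ Y = (A \ Y)ᶜ := by ext; simp [imp_iff_not_or]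
  rw [mem_inf_principal', mem_inf_principal', h₁, h₂]
  constructor
  · intro hY
    by_contra hAY
    exact hmin (A ∩ Y) ⟨inter_subset_left.trans hAB, hY⟩
      ⟨inter_subset_left, hY, by rwa [sdiff_self_inter]⟩
  · intro hY hAY
    exact hA (by simpa [← compl_union, sdiff_union_inter] using inter_mem hY hAY)

theorem exists_ultrafilters_eq_inf_principal
    (hF : ∀ A : ℕ → Set α, Pairwise (Disjoint on A) → ∃ n, (A n)ᶜ ∈ F) :
    ∃ (k : ℕ) (A : Fin k → Set α) (D : Fin k → Ultrafilter α),
      (∀ t, (D t : Filter α) = F ⊓ 𝓟 (A t)) ∧ F = ⨆ t, (D t : Filter α) := by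
  let P : Set α → Prop := fun A => ∃ D : Ultrafilter α, (D : Filter α) = F ⊓ 𝓟 A
  suffices ∃ s : Finset (Set α), (∀ A ∈ s, P A) ∧ ⋃₀ ↑s ∈ F by
    obtain ⟨s, hsP, hs⟩ := this
    choose D hD using fun t : Fin s.card => hsP _ (s.equivFin.symm t).2
    refine ⟨s.card, fun t => s.equivFin.symm t, D, hD,
      le_antisymm (fun Y hY => ?_) (iSup_le fun t => (hD t).trans_le inf_le_left)⟩
    have hY' : ∀ t, (↑(s.equivFin.symm t) : Set α)ᶜ ∪ Y ∈ F := fun t => by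
      rw [← mem_inf_principal', ← hD t]
      exact mem_iSup.1 hY t
    refine mem_of_superset (inter_mem (iInter_mem.2 hY') hs) ?_
    rintro x ⟨hx, A, hA, hxA⟩
    obtain ⟨t, ht⟩ := s.equivFin.symm.surjective ⟨A, hA⟩
    exact (mem_iInter.1 hx t).resolve_left (by simpa [ht] using hxA)
  by_contra! h
  obtain ⟨A, hAP, hA⟩ := exists_seq_of_forall_finset_exists P Disjoint fun s hs => by
    obtain ⟨A, hA, hAP⟩ :=
      exists_subset_ultrafilter_eq_inf_principal hF (by rw [compl_compl]; exact h s hs)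
    exact ⟨A, hAP, fun B hB => disjoint_left.2 fun x hxB hxA => hA hxA (mem_sUnion_of_mem hxB hB)⟩
  obtain ⟨n, hn⟩ := hF A ((pairwise_disjoint_on A).2 hA)
  obtain ⟨D, hD⟩ := hAP n
  exact D.neBot.ne (hD.trans (inf_principal_eq_bot.2 hn))

end Filter

/-- Given a descending sequence of pp-formulas and a homomorphism
`f : ∏_{i∈I} U_i → ⊕_{j∈J} V_j`, there exist `n₀ < ω`, finitely many `ω₁`-complete
ultrafilters `D₁, …, D_k` on `I` and a finite `J' ⊆ J` such that
`f(ψ_{n₀}(∏ U_i) ∩ ⋂ₙ Ker(π_{Dₙ})) ⊆ ⊕_{j∈J'} V_j + ⋂ₙ ψ_n(⊕ V_j)`. -/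
theorem exists_ultrafilters_image_subset
    (R : Type u) [Ring R] (ψ : ℕ → PPFormula R) (hdesc : PPDescending ψ)
    (I J : Type u) (U : I → Type u) [∀ i, AddCommGroup (U i)] [∀ i, Module R (U i)]
    (V : J → Type u) [∀ j, AddCommGroup (V j)] [∀ j, Module R (V j)]
    (f : (∀ i, U i) →ₗ[R] ⨁ j, V j) :
    ∃ (n₀ k : ℕ) (D : Fin k → Ultrafilter I),
      (∀ t : Fin k, FilterComplete (D t : Filter I) (Cardinal.aleph 1)) ∧
      ∃ J' : Finset J,
        ∀ x ∈ (ψ n₀).set (∀ i, U i) ∩ ⋂ t : Fin k, {x : ∀ i, U i | {i | x i = 0} ∈ D t},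
          ∃ a b : ⨁ j, V j, (∀ j ∉ J', a j = 0) ∧
            (∀ n : ℕ, b ∈ (ψ n).set (⨁ j, V j)) ∧ f x = a + b := by
  obtain ⟨n₀, E, hE⟩ := exists_forall_negligibleWith f hdesc
  obtain ⟨k, A, D, hD, hF⟩ := Filter.exists_ultrafilters_eq_inf_principal
    (F := negligibleFilter f hdesc) fun A hA =>
      (exists_negligible_of_pairwise_disjoint hdesc A hA).imp fun _ h => by
        rwa [negligibleFilter, mem_ofCountableUnion, compl_compl]
  refine ⟨n₀, k, D, fun t => hD t ▸ filterComplete_aleph_one _, E, ?_⟩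
  rintro x ⟨hx, hxD⟩
  have hnull : {i | x i = 0} ∈ negligibleFilter f hdesc :=
    hF ▸ mem_iSup.2 fun t => mem_iInter.1 hxD t
  refine ⟨f x - projCompl R E (f x), projCompl R E (f x), fun j hj => ?_,
    mem_ppInter.1 (hE _ hnull x hx fun i hi => not_not.1 hi), (sub_add_cancel _ _).symm⟩
  rw [DFinsupp.sub_apply, projCompl_apply_of_notMem _ hj, sub_self]
end

section
/- For any ring R and any Σ-algebraically compact left R-module M, Add(M) ⊆ Prod(M): every direct summand of a direct sum of copies of M is isomorphic to a direct summand of a direct product of copies of M. (No set-theoretic hypothesis on |M| is needed for this direction.) -/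
universe u

open Cardinal

/-- `M` is Σ-algebraically compact: every descending chain of pp-definable
subgroups of `M` eventually stabilizes. -/
def IsSigmaAlgCompact (R : Type u) [Ring R] (M : Type u) [AddCommGroup M] [Module R M] : Prop :=
  ∀ ψ : ℕ → PPFormula R, (∀ n : ℕ, (ψ (n + 1)).set M ⊆ (ψ n).set M) →
    ∃ N : ℕ, ∀ n : ℕ, N ≤ n → (ψ n).set M = (ψ N).set M

/-- `N` belongs to `Add M`: it is isomorphic to a direct summand of a direct sum
`M^(I)` of copies of `M`. -/
def MemAdd (R : Type u) [Ring R] (M : Type u) [AddCommGroup M] [Module R M]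
    (N : Type u) [AddCommGroup N] [Module R N] : Prop :=
  ∃ (I : Type u) (ι : N →ₗ[R] (I →₀ M)) (π : (I →₀ M) →ₗ[R] N), π ∘ₗ ι = LinearMap.id

/-- `N` belongs to `Prod M`: it is isomorphic to a direct summand of a direct power
`M^I` of copies of `M`. -/
def MemProd (R : Type u) [Ring R] (M : Type u) [AddCommGroup M] [Module R M]
    (N : Type u) [AddCommGroup N] [Module R N] : Prop :=
  ∃ (I : Type u) (ι : N →ₗ[R] (I → M)) (π : (I → M) →ₗ[R] N), π ∘ₗ ι = LinearMap.id

/-- `Add(M) ⊆ Prod(M)`. -/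
def AddLeProd (R : Type u) [Ring R] (M : Type u) [AddCommGroup M] [Module R M] : Prop :=
  ∀ (N : Type u) [AddCommGroup N] [Module R N], MemAdd R M N → MemProd R M N

/-! The chain condition on pp-definable subgroups passes from `M` to `M^(I)`, coordinatewise, and
makes `M^(I)` algebraically compact: a system of linear equations with constants in `M^(I)` whose
finite subsystems are solvable is solvable. For a single unknown, a finite subsystem whose
homogeneous pp-definable set of values is minimal fixes a value that works for every finite
subsystem; Zorn's lemma on finitely solvable systems handles arbitrarily many unknowns. The equations
saying that `g : M^I → M^(I)` is linear and fixes `M^(I)` are finitely solvable by truncating to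
finitely many coordinates, so `M^(I)` is a direct summand of `M^I`, and with it every module in
`Add(M)`. -/

open Finsupp

namespace PPFormula

variable {R : Type u} [Ring R] (ψ : PPFormula R)
variable {X Y : Type u} [AddCommGroup X] [Module R X] [AddCommGroup Y] [Module R Y]

theorem zero_mem_set : (0 : X) ∈ ψ.set X :=
  ⟨0, fun j => by simp⟩

theorem add_mem_set {x x' : X} (hx : x ∈ ψ.set X) (hx' : x' ∈ ψ.set X) : x + x' ∈ ψ.set X := by
  obtain ⟨y, hy⟩ := hx
  obtain ⟨y', hy'⟩ := hx'
  refine ⟨y + y', fun j => ?_⟩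
  simp only [Pi.add_apply, smul_add, Finset.sum_add_distrib]
  rw [add_add_add_comm, hy j, hy' j, add_zero]

theorem map_mem_set (f : X →ₗ[R] Y) {x : X} (hx : x ∈ ψ.set X) : f x ∈ ψ.set Y := by
  obtain ⟨y, hy⟩ := hx
  exact ⟨f ∘ y, fun j => by simpa [map_sum] using congr(f $(hy j))⟩

theorem mem_set_finsupp_iff {I : Type u} {x : I →₀ X} :
    x ∈ ψ.set (I →₀ X) ↔ ∀ i, x i ∈ ψ.set X := by
  refine ⟨fun hx i => ψ.map_mem_set (lapply i) hx, fun hx => ?_⟩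
  rw [← x.sum_single]
  exact Finset.sum_induction _ (· ∈ ψ.set (I →₀ X)) (fun _ _ => ψ.add_mem_set) ψ.zero_mem_set
    fun i _ => ψ.map_mem_set (lsingle i) (hx i)

end PPFormula

section SigmaAlgCompact

variable {R : Type u} [Ring R] {X : Type u} [AddCommGroup X] [Module R X]

theorem IsSigmaAlgCompact.finsupp {M : Type u} [AddCommGroup M] [Module R M]
    (hM : IsSigmaAlgCompact R M) (I : Type u) : IsSigmaAlgCompact R (I →₀ M) := by
  intro ψ hψ
  simp_rw [Set.ext_iff, PPFormula.mem_set_finsupp_iff]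
  rcases isEmpty_or_nonempty I with _ | ⟨⟨i₀⟩⟩
  · exact ⟨0, fun _ _ _ => by simp⟩
  have hψM : ∀ n, (ψ (n + 1)).set M ⊆ (ψ n).set M := fun n m hm => by
    classical
    have hsingle : single i₀ m ∈ (ψ n).set (I →₀ M) :=
      hψ n <| (ψ (n + 1)).mem_set_finsupp_iff.2 fun i => by
        rcases eq_or_ne i₀ i with rfl | hi
        · simpa using hm
        · simpa [single_apply, hi] using (ψ (n + 1)).zero_mem_set (X := M)
    simpa using (ψ n).mem_set_finsupp_iff.1 hsingle i₀
  obtain ⟨N, hN⟩ := hM ψ hψM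
  exact ⟨N, fun n hn x => by rw [hN n hn]⟩

theorem IsSigmaAlgCompact.exists_minimal (hX : IsSigmaAlgCompact R X) {ι : Type*} [Nonempty ι]
    (s : ι → Set X) (hs : ∀ i, ∃ ψ : PPFormula R, ψ.set X = s i) :
    ∃ i, ∀ j, s j ⊆ s i → s j = s i := by
  by_contra! h
  choose next hsub hne using h
  choose ψ hψ using hs
  let idx : ℕ → ι := fun n => next^[n] (Classical.arbitrary ι)
  obtain ⟨N, hN⟩ := hX (fun n => ψ (idx n)) fun n => by
    simpa only [hψ, idx, Function.iterate_succ_apply'] using hsub (idx n)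
  exact hne (idx N) <| by
    simpa only [hψ, idx, Function.iterate_succ_apply'] using hN (N + 1) N.le_succ

end SigmaAlgCompact

section Definability

variable {R : Type u} [Ring R] {X : Type u} [AddCommGroup X] [Module R X]

theorem PPFormula.exists_set_eq_of_fintype {κ ν : Type*} [Fintype κ] [Fintype ν]
    (a : ν → R) (B : κ → ν → R) :
    ∃ ψ : PPFormula R, ψ.set X = {m | ∃ y : κ → X, ∀ j, a j • m + ∑ i, B i j • y i = 0} := by
  let eκ := Fintype.equivFin κ
  let eν := Fintype.equivFin ν
  refine ⟨⟨_, _, a ∘ eν.symm, fun i j => B (eκ.symm i) (eν.symm j)⟩, Set.ext fun m => ?_⟩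
  constructor
  · rintro ⟨y, hy⟩
    refine ⟨y ∘ eκ, fun j => ?_⟩
    simpa [← eκ.sum_comp] using hy (eν j)
  · rintro ⟨y, hy⟩
    refine ⟨y ∘ eκ.symm, fun j => ?_⟩
    simpa [← eκ.symm.sum_comp] using hy (eν.symm j)

theorem PPFormula.exists_set_eq_image_eval {V ν : Type*} [Fintype ν] (f : ν → V →₀ R) (v : V) :
    ∃ ψ : PPFormula R,
      ψ.set X = (fun x : V → X => x v) '' {x | ∀ j, linearCombination R x (f j) = 0} := by
  classical
  let W : Finset V := insert v (Finset.univ.sup fun j => (f j).support)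
  let g : Option ν → V →₀ R := fun j => j.elim (single v 1) f
  have hgW : ∀ j, g j ∈ supported R R (W : Set V) := by
    rintro (_ | j) <;> rw [mem_supported, Finset.coe_subset]
    · exact support_single_subset.trans (by simp [W])
    · exact (Finset.le_sup (f := fun j => (f j).support) (Finset.mem_univ j)).trans
        (Finset.subset_insert _ _)
  have hsum (x : V → X) (j) : linearCombination R x (g j) = ∑ w : W, g j w • x w := by
    rw [linearCombination_apply_of_mem_supported R (hgW j)]
    exact (Finset.sum_coe_sort W fun w => g j w • x w).symm
  have hsolv (x : V → X) (m : X) :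
      (∀ j : Option ν, j.elim (-1 : R) 0 • m + ∑ w : W, g j w • x w = 0) ↔
        x v = m ∧ ∀ j, linearCombination R x (f j) = 0 := by
    simp_rw [← hsum, Option.forall]
    simp [g, neg_add_eq_zero, eq_comm]
  obtain ⟨ψ, hψ⟩ := PPFormula.exists_set_eq_of_fintype (X := X)
    (fun j : Option ν => j.elim (-1 : R) 0) fun (w : W) j => g j w
  refine ⟨ψ, hψ.trans (Set.ext fun m => ⟨?_, ?_⟩)⟩
  · rintro ⟨y, hy⟩
    have hx := (hsolv (fun w => if h : w ∈ W then y ⟨w, h⟩ else 0) m).1 (by simpa using hy)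
    exact ⟨_, hx.2, hx.1⟩
  · rintro ⟨x, hx, rfl⟩
    exact ⟨fun w => x w, (hsolv x _).2 ⟨rfl, hx⟩⟩

end Definability

section LinearSystem

variable {R : Type u} [Ring R] {X : Type u} [AddCommGroup X] [Module R X] {V : Type*}

/-- A pair `e` stands for the linear equation `∑ v, e.1 v • x v = e.2` in unknowns `x : V → X`. -/
def IsSolution (S : Set ((V →₀ R) × X)) (x : V → X) : Prop :=
  ∀ e ∈ S, linearCombination R x e.1 = e.2

def FinitelySolvable (S : Set ((V →₀ R) × X)) : Prop :=
  ∀ F : Finset ((V →₀ R) × X), ↑F ⊆ S → ∃ x, IsSolution (↑F : Set ((V →₀ R) × X)) x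

theorem IsSolution.mono {S T : Set ((V →₀ R) × X)} {x : V → X} (hS : IsSolution S x)
    (hTS : T ⊆ S) : IsSolution T x :=
  fun e he => hS e (hTS he)

theorem Finsupp.linearCombination_add_left (x y : V → X) (l : V →₀ R) :
    linearCombination R (x + y) l = linearCombination R x l + linearCombination R y l :=
  congr($(map_add (bilinearCombination R ℕ) x y) l)

theorem Finsupp.linearCombination_sub_left (x y : V → X) (l : V →₀ R) :
    linearCombination R (x - y) l = linearCombination R x l - linearCombination R y l :=
  congr($(map_sub (bilinearCombination R ℕ) x y) l)

variable {S : Set ((V →₀ R) × X)}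

theorem FinitelySolvable.exists_insert_single (hX : IsSigmaAlgCompact R X)
    (hS : FinitelySolvable S) (v : V) :
    ∃ c : X, FinitelySolvable (insert (single v 1, c) S) := by
  classical
  let H (F : {F : Finset ((V →₀ R) × X) // ↑F ⊆ S}) : Set X :=
    (fun x : V → X => x v) '' {x | ∀ e ∈ F.1, linearCombination R x e.1 = 0}
  have : Nonempty {F : Finset ((V →₀ R) × X) // ↑F ⊆ S} := ⟨⟨∅, by simp⟩⟩
  obtain ⟨F₀, hF₀⟩ := hX.exists_minimal H fun F => by
    simpa [H] using PPFormula.exists_set_eq_image_eval (X := X) (fun e : F.1 => e.1.1) v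
  obtain ⟨x₀, hx₀⟩ := hS F₀ F₀.2
  -- By minimality `H (F₀ ∪ F) = H F₀`, so a solution of `F₀ ∪ F` can be corrected by a
  -- homogeneous one to take the value `x₀ v` at `v`.
  have hx₀_ext (F : Finset ((V →₀ R) × X)) (hF : ↑F ⊆ S) :
      ∃ x, x v = x₀ v ∧ IsSolution (↑F : Set ((V →₀ R) × X)) x := by
    let G : {F : Finset ((V →₀ R) × X) // ↑F ⊆ S} := ⟨F₀ ∪ F, by simpa using ⟨F₀.2, hF⟩⟩
    obtain ⟨y, hy⟩ := hS G G.2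
    have hGF₀ : H G = H F₀ := hF₀ G <| Set.image_mono fun x hx e he =>
      hx e (Finset.mem_union_left _ he)
    obtain ⟨z, hz, hzv⟩ : x₀ v - y v ∈ H G := hGF₀ ▸ ⟨x₀ - y, fun e he => by
      rw [linearCombination_sub_left, hx₀ e he, hy e (Finset.mem_union_left _ he), sub_self],
      rfl⟩
    refine ⟨y + z, by simp [hzv], fun e he => ?_⟩
    rw [linearCombination_add_left, hz e (Finset.mem_union_right _ he),
      hy e (Finset.mem_union_right _ he), add_zero]
  refine ⟨x₀ v, fun F hF => ?_⟩
  obtain ⟨x, hxv, hx⟩ := hx₀_ext (F.erase (single v 1, x₀ v)) fun e he => by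
    rw [Finset.coe_erase] at he
    exact (hF he.1).resolve_left he.2
  refine ⟨x, fun e he => ?_⟩
  by_cases hev : e = (single v 1, x₀ v)
  · simp [hev, hxv]
  · exact hx e (Finset.mem_erase.2 ⟨hev, he⟩)

theorem FinitelySolvable.exists_maximal (hS : FinitelySolvable S) :
    ∃ T, S ⊆ T ∧ Maximal FinitelySolvable T := by
  refine zorn_subset_nonempty {T | FinitelySolvable T} (fun c hc hchain hne =>
    ⟨⋃₀ c, show FinitelySolvable _ from fun F hF => ?_,
      fun T hT => Set.subset_sUnion_of_mem hT⟩) S hS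
  obtain ⟨T, hTc, hFT⟩ :=
    hchain.directedOn.exists_mem_subset_of_finite_of_subset_sUnion hne F.finite_toSet hF
  exact hc hTc F hFT

theorem FinitelySolvable.exists_isSolution (hX : IsSigmaAlgCompact R X)
    (hS : FinitelySolvable S) : ∃ x, IsSolution S x := by
  classical
  obtain ⟨T, hST, hT⟩ := hS.exists_maximal
  choose c hc using fun v => hT.prop.exists_insert_single hX v
  refine ⟨c, IsSolution.mono (fun e he => ?_) hST⟩
  let F : Finset ((V →₀ R) × X) := insert e (e.1.support.image fun v => (single v 1, c v))
  obtain ⟨x, hx⟩ := hT.prop F <| by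
    simpa [F, Set.insert_subset_iff, he, Set.subset_def] using
      fun v _ => hT.mem_of_prop_insert (hc v)
  rw [← hx e (Finset.mem_insert_self _ _)]
  refine sum_congr fun v hv => ?_
  simpa using congrArg (e.1 v • ·)
    (hx _ (Finset.mem_insert_of_mem (Finset.mem_image_of_mem _ hv))).symm

end LinearSystem

section Splitting

variable {R : Type u} [Ring R] {X Y : Type u} [AddCommGroup X] [Module R X]
  [AddCommGroup Y] [Module R Y] (j : X →ₗ[R] Y)

/-- The equations on `g : Y → X` saying that `g` is `R`-linear and `g (j x) = x` for `x ∈ T`. -/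
def splittingSystem (T : Set X) : Set ((Y →₀ R) × X) :=
  Set.range (fun p : Y × Y => (single (p.1 + p.2) 1 - single p.1 1 - single p.2 1, 0)) ∪
    Set.range (fun p : R × Y => (single (p.1 • p.2) 1 - single p.2 p.1, 0)) ∪
    (fun x => (single (j x) 1, x)) '' T

theorem isSolution_splittingSystem_iff {T : Set X} {g : Y → X} :
    IsSolution (splittingSystem j T) g ↔ ∃ f : Y →ₗ[R] X, ⇑f = g ∧ ∀ x ∈ T, f (j x) = x := by
  constructor
  · intro hg
    refine ⟨⟨⟨g, fun y y' => ?_⟩, fun r y => ?_⟩, rfl, fun x hx => ?_⟩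
    · simpa [sub_eq_zero, sub_sub] using hg _ (Or.inl (Or.inl ⟨(y, y'), rfl⟩))
    · simpa [sub_eq_zero] using hg _ (Or.inl (Or.inr ⟨(r, y), rfl⟩))
    · simpa using hg _ (Or.inr ⟨x, hx, rfl⟩)
  · rintro ⟨f, rfl, hf⟩ e ((⟨⟨y, y'⟩, rfl⟩ | ⟨⟨r, y⟩, rfl⟩) | ⟨x, hx, rfl⟩)
    · simp
    · simp
    · simpa using hf x hx

theorem splittingSystem_subset_image_snd {T : Set X} {F : Set ((Y →₀ R) × X)}
    (hF : F ⊆ splittingSystem j T) : F ⊆ splittingSystem j (Prod.snd '' F) := by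
  intro e he
  rcases hF he with h | ⟨x, -, rfl⟩
  · exact Or.inl h
  · exact Or.inr ⟨x, ⟨_, he, rfl⟩, rfl⟩

theorem LinearMap.exists_leftInverse_of_locallySplit (hX : IsSigmaAlgCompact R X)
    (hj : ∀ T : Finset X, ∃ f : Y →ₗ[R] X, ∀ x ∈ T, f (j x) = x) :
    ∃ f : Y →ₗ[R] X, f ∘ₗ j = LinearMap.id := by
  classical
  have hS : FinitelySolvable (splittingSystem j Set.univ) := fun F hF => by
    obtain ⟨f, hf⟩ := hj (F.image Prod.snd)
    refine ⟨f, IsSolution.mono ((isSolution_splittingSystem_iff j).2 ⟨f, rfl, ?_⟩)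
      (splittingSystem_subset_image_snd j hF)⟩
    simpa using hf
  obtain ⟨g, hg⟩ := hS.exists_isSolution hX
  obtain ⟨f, -, hf⟩ := (isSolution_splittingSystem_iff j).1 hg
  exact ⟨f, LinearMap.ext fun x => hf x trivial⟩

end Splitting

theorem Finsupp.exists_forall_lcoeFun_eq {R : Type u} [Ring R] {M : Type u} [AddCommGroup M]
    [Module R M] {I : Type u} (T : Finset (I →₀ M)) :
    ∃ f : (I → M) →ₗ[R] (I →₀ M), ∀ s ∈ T, f ⇑s = s := by
  classical
  refine ⟨∑ i ∈ T.sup support, lsingle (R := R) i ∘ₗ LinearMap.proj i, fun s hs => ?_⟩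
  simp only [LinearMap.coe_sum, Finset.sum_apply, LinearMap.comp_apply, LinearMap.proj_apply,
    lsingle_apply]
  rw [← s.sum_of_support_subset (Finset.le_sup hs) _ fun _ _ => single_zero _, s.sum_single]

/-- For any ring `R` and any Σ-algebraically compact left `R`-module
`M`, `Add(M) ⊆ Prod(M)`. -/
theorem addLeProd_of_sigmaAlgCompact
    (R : Type u) [Ring R] (M : Type u) [AddCommGroup M] [Module R M]
    (hM : IsSigmaAlgCompact R M) :
    AddLeProd R M := by
  rintro N _ _ ⟨I, ι, π, hπι⟩
  obtain ⟨f, hf⟩ := (lcoeFun (α := I) (M := M) (R := R)).exists_leftInverse_of_locallySplit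
    (hM.finsupp I) Finsupp.exists_forall_lcoeFun_eq
  refine ⟨I, lcoeFun ∘ₗ ι, π ∘ₗ f, ?_⟩
  rw [LinearMap.comp_assoc, ← LinearMap.comp_assoc ι, hf, LinearMap.id_comp, hπι]
end

section
/- Let κ be an infinite regular cardinal, λ a cardinal, b : λ → [λ]^{<κ} a bijection, and for α < λ set L_α = { γ < λ : α ∈ b(γ) }. Let U be any ultrafilter on λ containing L_α for every α < λ, and let μ be a cardinal. Then the map h sending a function f : λ → μ to the U-equivalence class of the family (f ↾ b(α))_{α<λ} in the reduced product ∏_{α<λ} (b(α) → μ) / U is injective; consequently |∏_{α<λ} μ^{b(α)} / U| ≥ μ^λ. -/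
universe u

open Cardinal

/-- The setoid on `∀ α, T α` given by `U`-a.e. equality; its quotient is the reduced
product `∏_α T α / U`. -/
def redSetoid {Λ : Type u} (U : Ultrafilter Λ) (T : Λ → Type u) : Setoid (∀ α, T α) where
  r x y := {α | x α = y α} ∈ (U : Filter Λ)
  iseqv := by
    refine ⟨fun x => ?_, fun {x y} h => ?_, fun {x y z} hxy hyz => ?_⟩
    · simp
    · exact Filter.mem_of_superset h fun α hα => (hα : x α = y α).symm
    · exact Filter.mem_of_superset (Filter.inter_mem hxy hyz)
        fun α hα => (hα.1 : x α = y α).trans hα.2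

/-- The reduced product `∏_α T α / U`. -/
def RedProd {Λ : Type u} (U : Ultrafilter Λ) (T : Λ → Type u) : Type u :=
  Quotient (redSetoid U T)

theorem eq_of_eventually_domRestrict_eq {Λ X S : Type*} {U : Filter Λ} [U.NeBot]
    {B : Λ → Set X} {f g : X → S}
    (hB : ∀ x, ∀ᶠ α in U, x ∈ B α)
    (hfg : ∀ᶠ α in U, (B α).domRestrict f = (B α).domRestrict g) : f = g := by
  funext x
  obtain ⟨α, hα, hxα⟩ := (hfg.and (hB x)).exists
  exact congrFun hα ⟨x, hxα⟩

theorem injective_mk_domRestrict_redProd {Λ X S : Type u} (U : Ultrafilter Λ) {B : Λ → Set X}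
    (hB : ∀ x, ∀ᶠ α in (U : Filter Λ), x ∈ B α) :
    Function.Injective fun f : X → S =>
      (Quotient.mk (redSetoid U fun α => B α → S) fun α => (B α).domRestrict f :
        RedProd U fun α => B α → S) :=
  fun _ _ h => eq_of_eventually_domRestrict_eq hB (Quotient.exact h)

theorem injective_restriction_map_redProd_general
    (κ : Cardinal.{u}) (Λ S : Type u)
    (b : Λ → {s : Set Λ // #s < κ})
    (U : Ultrafilter Λ)
    (hU : ∀ α : Λ, {γ : Λ | α ∈ (b γ : Set Λ)} ∈ (U : Filter Λ)) :
    Function.Injective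
      (fun f : Λ → S =>
        (Quotient.mk (redSetoid U (fun α => (↥(b α : Set Λ) → S)))
          (fun α (γ : ↥(b α : Set Λ)) => f γ.1) :
          RedProd U (fun α => (↥(b α : Set Λ) → S)))) ∧
    #S ^ #Λ ≤ #(RedProd U (fun α => (↥(b α : Set Λ) → S))) := by
  have hinj := injective_mk_domRestrict_redProd (S := S) U hU
  exact ⟨hinj, (power_def S Λ).symm ▸ mk_le_of_injective hinj⟩

/-- Let `b : Λ → [Λ]^{<κ}` be a bijection, `L_α = {γ : α ∈ b γ}`, and
`U` an ultrafilter on `Λ` containing every `L_α`. Then the map sending `f : Λ → S` to the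
class of `(f ↾ b α)_α` in the reduced product `∏_α (b α → S) / U` is injective;
consequently `|∏_α S^{b α} / U| ≥ |S|^|Λ|`. -/
theorem injective_restriction_map_redProd
    (κ : Cardinal.{u}) (Λ S : Type u)
    (b : Λ → {s : Set Λ // #s < κ}) (hb : Function.Bijective b)
    (U : Ultrafilter Λ)
    (hU : ∀ α : Λ, {γ : Λ | α ∈ (b γ : Set Λ)} ∈ (U : Filter Λ)) :
    Function.Injective
      (fun f : Λ → S =>
        (Quotient.mk (redSetoid U (fun α => (↥(b α : Set Λ) → S)))
          (fun α (γ : ↥(b α : Set Λ)) => f γ.1) :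
          RedProd U (fun α => (↥(b α : Set Λ) → S)))) ∧
    #S ^ #Λ ≤ #(RedProd U (fun α => (↥(b α : Set Λ) → S))) :=
  injective_restriction_map_redProd_general κ Λ S b U hU
end

section
/- Let κ be a nonzero cardinal, (S_i)_{i∈I} a family of sets with |S_i| ≤ κ for every i ∈ I, and D₁, …, D_k κ⁺-complete ultrafilters on I. Let D be the filter { Z ⊆ I : there exist Z_n ∈ D_n (n = 1, …, k) with Z₁ ∪ ⋯ ∪ Z_k ⊆ Z }. Then the reduced product ∏_{i∈I} S_i / D has cardinality at most κ^k. -/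
/-!
A `κ⁺`-complete ultrafilter cannot split `I` into at most `κ` pieces, so every function from `I`
into a set of size `≤ κ` is constant on a set of the ultrafilter; hence each ultraproduct
`∏ S_i / D_t` has size `≤ κ`. As `D` is the intersection of the `D_t`, the reduced product
embeds into the product of these `k` ultraproducts.
-/

universe u

open Cardinal

namespace FilterComplete

variable {I ι : Type u} {θ : Cardinal.{u}}

theorem iInter_mem {F : Filter I} (hF : FilterComplete F θ) {s : ι → Set I} (hι : #ι < θ)
    (hs : ∀ a, s a ∈ F) : ⋂ a, s a ∈ F := by
  rw [← Set.sInter_range]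
  exact hF _ (mk_range_le.trans_lt hι) (Set.forall_mem_range.2 hs)

theorem exists_mem_of_iUnion_mem {U : Ultrafilter I} (hU : FilterComplete (U : Filter I) θ)
    {s : ι → Set I} (hι : #ι < θ) (hs : ⋃ a, s a ∈ U) : ∃ a, s a ∈ U := by
  by_contra! h
  have hcompl : ⋂ a, (s a)ᶜ ∈ U :=
    hU.iInter_mem hι fun a => Ultrafilter.compl_mem_iff_notMem.2 (h a)
  rw [← Set.compl_iUnion] at hcompl
  exact Ultrafilter.compl_mem_iff_notMem.1 hcompl hs

theorem exists_eventually_eq {U : Ultrafilter I} (hU : FilterComplete (U : Filter I) θ)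
    (g : I → ι) (hι : #ι < θ) : ∃ a, ∀ᶠ i in (U : Filter I), g i = a := by
  refine hU.exists_mem_of_iUnion_mem (s := fun a => {i | g i = a}) hι ?_
  simp only [Set.iUnion_ofPred, exists_eq', Set.ofPred_true]
  exact Filter.univ_mem

theorem mk_germ_le {U : Ultrafilter I} (hU : FilterComplete (U : Filter I) θ) (hι : #ι < θ) :
    #((U : Filter I).Germ ι) ≤ #ι :=
  mk_le_of_surjective fun φ => φ.inductionOn fun g =>
    (hU.exists_eventually_eq g hι).imp fun _ ha => (Filter.Germ.coe_eq.2 ha).symm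

end FilterComplete

theorem exists_iUnion_subset_iff_forall_mem {I ι : Type*} (F : ι → Filter I) (Z : Set I) :
    (∃ Z' : ι → Set I, (∀ t, Z' t ∈ F t) ∧ ⋃ t, Z' t ⊆ Z) ↔ ∀ t, Z ∈ F t :=
  ⟨fun ⟨Z', hZ', hsub⟩ t => Filter.mem_of_superset (hZ' t) ((Set.subset_iUnion Z' t).trans hsub),
    fun h => ⟨fun _ => Z, h, Set.iUnion_subset fun _ => subset_rfl⟩⟩

theorem Cardinal.mk_quot_le_of_forall_iff {α β : Type u} {r : α → α → Prop} (g : α → β)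
    (hg : ∀ x y, r x y ↔ g x = g y) : #(Quot r) ≤ #β :=
  mk_le_of_injective (f := Quot.lift g fun x y => (hg x y).1) <| by
    rintro ⟨x⟩ ⟨y⟩ h
    exact Quot.sound ((hg x y).2 h)

theorem mk_redProd_le_pow_general
    (κ : Cardinal.{u}) (I : Type u) (S : I → Type u)
    (hS : ∀ i : I, #(S i) ≤ κ) (k : ℕ) (D : Fin k → Ultrafilter I)
    (hD : ∀ t : Fin k, FilterComplete (D t : Filter I) (Order.succ κ)) :
    #(Quot (fun x y : ∀ i, S i => {i : I | x i = y i} ∈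
        {Z : Set I | ∃ Z' : Fin k → Set I,
          (∀ t : Fin k, Z' t ∈ (D t : Filter I)) ∧ (⋃ t : Fin k, Z' t) ⊆ Z}))
      ≤ κ ^ (k : Cardinal.{u}) := by
  have f : ∀ i, S i ↪ κ.out := fun i => Classical.choice (by rw [← le_def, mk_out]; exact hS i)
  let germs (x : ∀ i, S i) (t : Fin k) : (D t : Filter I).Germ κ.out := ↑fun i => f i (x i)
  have hgerms : ∀ x y : ∀ i, S i, {i | x i = y i} ∈ {Z : Set I | ∃ Z' : Fin k → Set I,
      (∀ t : Fin k, Z' t ∈ (D t : Filter I)) ∧ (⋃ t : Fin k, Z' t) ⊆ Z} ↔ germs x = germs y := by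
    intro x y
    simp only [Set.mem_ofPred_eq, exists_iUnion_subset_iff_forall_mem, funext_iff, germs,
      Filter.Germ.coe_eq, Filter.EventuallyEq, (f _).injective.eq_iff]
    rfl
  have hout : #κ.out < Order.succ κ := by rw [mk_out]; exact Order.lt_succ κ
  calc _ ≤ #(∀ t, (D t : Filter I).Germ κ.out) := mk_quot_le_of_forall_iff germs hgerms
    _ ≤ prod fun _ : Fin k => κ := by
        rw [mk_pi]
        exact prod_le_prod _ _ fun t => ((hD t).mk_germ_le hout).trans (mk_out κ).le
    _ = κ ^ (k : Cardinal.{u}) := by simp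

/-- Let `κ ≠ 0`, `(S_i)_{i∈I}` a family of sets with `|S_i| ≤ κ`, and
`D₁, …, D_k` `κ⁺`-complete ultrafilters on `I`. Let `D` be the filter
`{ Z : ∃ Zₙ ∈ Dₙ with Z₁ ∪ ⋯ ∪ Z_k ⊆ Z }`. Then the reduced product `∏_i S_i / D`
(the quotient of `∏_i S_i` by the equivalence `x ~ y ↔ {i : x i = y i} ∈ D`) has
cardinality at most `κ^k`. -/
theorem mk_redProd_le_pow
    (κ : Cardinal.{u}) (hκ : κ ≠ 0) (I : Type u) (S : I → Type u)
    (hS : ∀ i : I, #(S i) ≤ κ) (k : ℕ) (D : Fin k → Ultrafilter I)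
    (hD : ∀ t : Fin k, FilterComplete (D t : Filter I) (Order.succ κ)) :
    #(Quot (fun x y : ∀ i, S i => {i : I | x i = y i} ∈
        {Z : Set I | ∃ Z' : Fin k → Set I,
          (∀ t : Fin k, Z' t ∈ (D t : Filter I)) ∧ (⋃ t : Fin k, Z' t) ⊆ Z}))
      ≤ κ ^ (k : Cardinal.{u}) :=
  mk_redProd_le_pow_general κ I S hS k D hD
end

section
/- Let R be a ring, (U_i)_{i∈I} a family of left R-modules, D a filter on I, and ψ any pp-formula datum over R. Then ψ(Ker(π_D)) = Ker(π_D) ∩ ψ(∏_{i∈I} U_i); that is, the kernel Ker(π_D) of the canonical projection onto the reduced product is a pure submodule of ∏_{i∈I} U_i with respect to pp-formulas in one free variable. -/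
/-!
Linear maps preserve pp-formulas. For `m ∈ Ker(π_D)`, the linear projection of `∏ U_i`
killing the coordinates where `m` vanishes fixes `m` and takes values in `Ker(π_D)`, since
the zero set of `m` is in `D`; applying it to witnesses of `ψ(m)` in the product gives
witnesses in `Ker(π_D)`.
-/

universe u

open Cardinal

/-- The kernel of the canonical projection `∏_{i∈I} U_i → ∏_{i∈I} U_i / D`: the
submodule of all `x` with `{ i : x i = 0 } ∈ D`. -/
def kerPi (R : Type u) [Ring R] {I : Type u} (U : I → Type u)
    [∀ i, AddCommGroup (U i)] [∀ i, Module R (U i)] (D : Filter I) :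
    Submodule R (∀ i, U i) where
  carrier := {x | {i : I | x i = 0} ∈ D}
  zero_mem' := by
    have : {i : I | (0 : ∀ i, U i) i = 0} = Set.univ := by
      ext i; simp
    simp only [Set.mem_setOf_eq, this]
    exact D.univ_mem
  add_mem' := by
    intro x y hx hy
    refine Filter.mem_of_superset (Filter.inter_mem hx hy) ?_
    rintro i ⟨h1, h2⟩
    simp only [Set.mem_setOf_eq] at h1 h2 ⊢
    simp [Pi.add_apply, h1, h2]
  smul_mem' := by
    intro c x hx
    refine Filter.mem_of_superset hx ?_
    intro i h
    simp only [Set.mem_setOf_eq] at h ⊢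
    simp [Pi.smul_apply, h]

section PPFormula

variable {R : Type u} [Ring R] (ψ : PPFormula R) {M N : Type u}
  [AddCommGroup M] [Module R M] [AddCommGroup N] [Module R N]

theorem PPFormula.map_mem_set_s14 (f : M →ₗ[R] N) {m : M} (hm : m ∈ ψ.set M) :
    f m ∈ ψ.set N := by
  obtain ⟨y, hy⟩ := hm
  refine ⟨f ∘ y, fun j => ?_⟩
  simpa [map_sum] using congrArg f (hy j)

theorem PPFormula.image_subtype_set_subset (K : Submodule R M) :
    Subtype.val '' ψ.set K ⊆ (K : Set M) ∩ ψ.set M := by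
  rintro _ ⟨m, hm, rfl⟩
  exact ⟨m.2, ψ.map_mem_set_s14 K.subtype hm⟩

theorem PPFormula.mem_image_subtype_set_of_map_eq_self (K : Submodule R M)
    (f : M →ₗ[R] K) {m : M} (hfm : (f m : M) = m) (hm : m ∈ ψ.set M) :
    m ∈ Subtype.val '' ψ.set K :=
  ⟨f m, ψ.map_mem_set_s14 f hm, hfm⟩

end PPFormula

section SupportProjection

variable {R : Type u} [Ring R] {I : Type u} {U : I → Type u}
  [∀ i, AddCommGroup (U i)] [∀ i, Module R (U i)]

open Classical in
noncomputable def supportProjection (x : ∀ i, U i) : (∀ i, U i) →ₗ[R] ∀ i, U i :=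
  LinearMap.pi fun i => if x i = 0 then 0 else LinearMap.proj i

theorem supportProjection_apply_self (x : ∀ i, U i) :
    supportProjection (R := R) x x = x := by
  funext i
  by_cases hi : x i = 0 <;> simp [supportProjection, hi]

theorem supportProjection_apply_of_eq_zero {x : ∀ i, U i} {i : I} (hi : x i = 0)
    (y : ∀ i, U i) : supportProjection (R := R) x y i = 0 := by
  simp [supportProjection, hi]

theorem supportProjection_mem_kerPi {D : Filter I} {x : ∀ i, U i} (hx : x ∈ kerPi R U D)
    (y : ∀ i, U i) : supportProjection (R := R) x y ∈ kerPi R U D :=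
  Filter.mem_of_superset hx fun _ hi => supportProjection_apply_of_eq_zero hi y

end SupportProjection

/-- For any pp-formula datum `ψ` and any filter `D` on `I`, the kernel
`Ker(π_D)` is pure in `∏_{i∈I} U_i` with respect to pp-formulas in one free variable:
`ψ(Ker(π_D)) = Ker(π_D) ∩ ψ(∏_{i∈I} U_i)`, where `ψ(Ker(π_D))` is computed in the
module `Ker(π_D)` and viewed as a subset of `∏_{i∈I} U_i`. -/
theorem ppSet_kerPi_eq_inter
    (R : Type u) [Ring R] (ψ : PPFormula R) (I : Type u) (U : I → Type u)
    [∀ i, AddCommGroup (U i)] [∀ i, Module R (U i)] (D : Filter I) :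
    Subtype.val '' (ψ.set (kerPi R U D)) =
      (kerPi R U D : Set (∀ i, U i)) ∩ ψ.set (∀ i, U i) := by
  refine (ψ.image_subtype_set_subset _).antisymm ?_
  rintro m ⟨hm, hψ⟩
  exact ψ.mem_image_subtype_set_of_map_eq_self _
    ((supportProjection m).codRestrict _ (supportProjection_mem_kerPi hm))
    (supportProjection_apply_self m) hψ
end
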